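/- Let C ≥ 0, R > 0 and m ∈ ℝ, and let (f_k)_{k≥0} be a sequence of complex numbers with |f_k| ≤ C·R^k·k!/(k+1)^m for all k. Then for every c₁ with 0 < c₁ < e/(3R) there exist c₂ > 0 and C' ≥ 0 such that for every integer N ≥ 1 one has |∑_{k=⌈c₁N⌉}^{⌊eN/(3R)⌋} N^{-k}·f_k| ≤ C'·exp(-c₂·N). -/

import Mathlib

/-!
For `k ≤ eN/(3R)` the bound `k! ≤ kᵏ` gives `N⁻ᵏ Rᵏ k! ≤ (Rk/N)ᵏ ≤ (e/3)ᵏ`. Since `e/3 < 1`, the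
polynomial factor `(k+1)⁻ᵐ` is absorbed by passing to a ratio `r ∈ (e/3, 1)`, so the terms of the
sum are `O(rᵏ)`, and a geometric tail starting at `k ≥ c₁N` is `O(r^{c₁N}) = O(exp (-c₁ log(1/r) N))`.
-/

open Real Finset Filter Nat

def IsAnalyticSymbol (C R m : ℝ) (f : ℕ → ℂ) : Prop :=
  ∀ k : ℕ, ‖f k‖ ≤ C * R ^ k * (Nat.factorial k) / ((k : ℝ) + 1) ^ m

lemma exp_one_div_three_lt_one : exp 1 / 3 < 1 := by
  have := exp_one_lt_d9
  rw [div_lt_one (by norm_num)]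
  linarith

lemma inv_rpow_le_pow_ceil_abs {x : ℝ} (hx : 1 ≤ x) (m : ℝ) : (x ^ m)⁻¹ ≤ x ^ ⌈|m|⌉₊ := by
  rw [← rpow_neg (by linarith), ← rpow_natCast]
  exact rpow_le_rpow_of_exponent_le hx ((neg_le_abs m).trans (Nat.le_ceil _))

lemma tendsto_add_one_pow_mul_pow_of_lt_one (M : ℕ) {x : ℝ} (hx0 : 0 < x) (hx1 : x < 1) :
    Tendsto (fun k : ℕ => ((k : ℝ) + 1) ^ M * x ^ k) atTop (nhds 0) := by
  have hshift := ((tendsto_pow_const_mul_const_pow_of_lt_one M hx0.le hx1).comp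
    (tendsto_add_atTop_nat 1)).const_mul x⁻¹
  rw [mul_zero] at hshift
  refine hshift.congr fun k => ?_
  simp only [Function.comp_apply, Nat.cast_add_one, pow_succ]
  field_simp

/-- Polynomial weights are absorbed by enlarging the ratio of a geometric sequence. -/
lemma exists_pow_div_rpow_le_mul_pow {q r : ℝ} (hq : 0 < q) (hqr : q < r) (m : ℝ) :
    ∃ A, 0 ≤ A ∧ ∀ k : ℕ, q ^ k / ((k : ℝ) + 1) ^ m ≤ A * r ^ k := by
  have hr : 0 < r := hq.trans hqr
  obtain ⟨A, hA⟩ := (tendsto_add_one_pow_mul_pow_of_lt_one ⌈|m|⌉₊ (div_pos hq hr)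
    ((div_lt_one hr).2 hqr)).bddAbove_range
  have hA_bound : ∀ k : ℕ, ((k : ℝ) + 1) ^ ⌈|m|⌉₊ * (q / r) ^ k ≤ A := fun k => hA ⟨k, rfl⟩
  refine ⟨A, le_trans (by simp) (hA_bound 0), fun k => ?_⟩
  calc q ^ k / ((k : ℝ) + 1) ^ m
      = q ^ k * (((k : ℝ) + 1) ^ m)⁻¹ := div_eq_mul_inv _ _
    _ ≤ q ^ k * ((k : ℝ) + 1) ^ ⌈|m|⌉₊ := by
        gcongr
        exact inv_rpow_le_pow_ceil_abs (by simp) m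
    _ = ((k : ℝ) + 1) ^ ⌈|m|⌉₊ * (q / r) ^ k * r ^ k := by
        rw [div_pow]; field_simp
    _ ≤ A * r ^ k := by gcongr; exact hA_bound k

lemma pow_mul_factorial_div_pow_le {R N a : ℝ} (hR : 0 ≤ R) (hN : 0 < N) {k : ℕ}
    (hk : R * k ≤ a * N) : R ^ k * k ! / N ^ k ≤ a ^ k := by
  calc R ^ k * k ! / N ^ k ≤ R ^ k * (k : ℝ) ^ k / N ^ k := by
        gcongr; exact_mod_cast Nat.factorial_le_pow k
    _ = (R * k / N) ^ k := by rw [div_pow, mul_pow]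
    _ ≤ a ^ k := by
        gcongr
        rwa [div_le_iff₀ hN]

lemma IsAnalyticSymbol.norm_inv_pow_mul_le {C R m : ℝ} {f : ℕ → ℂ}
    (hf : IsAnalyticSymbol C R m f) (hC : 0 ≤ C) (hR : 0 ≤ R) {N : ℕ} (hN : 0 < N) {a : ℝ}
    {k : ℕ} (hk : R * k ≤ a * N) :
    ‖(N : ℂ)⁻¹ ^ k * f k‖ ≤ C * (a ^ k / ((k : ℝ) + 1) ^ m) := by
  rw [norm_mul, norm_pow, norm_inv, Complex.norm_natCast]
  calc (N : ℝ)⁻¹ ^ k * ‖f k‖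
      ≤ (N : ℝ)⁻¹ ^ k * (C * R ^ k * k ! / ((k : ℝ) + 1) ^ m) := by gcongr; exact hf k
    _ = C * ((R ^ k * k ! / (N : ℝ) ^ k) / ((k : ℝ) + 1) ^ m) := by
        rw [inv_pow]; ring
    _ ≤ C * (a ^ k / ((k : ℝ) + 1) ^ m) := by
        gcongr
        exact pow_mul_factorial_div_pow_le hR (by exact_mod_cast hN) hk

lemma sum_Icc_pow_le_of_lt_one {r : ℝ} (hr0 : 0 ≤ r) (hr1 : r < 1) (K L : ℕ) :
    ∑ k ∈ Icc K L, r ^ k ≤ r ^ K / (1 - r) := by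
  rw [← Ico_add_one_right_eq_Icc]
  exact geom_sum_Ico_le_of_lt_one hr0 hr1

lemma pow_le_exp_log_mul {r x : ℝ} (hr0 : 0 < r) (hr1 : r ≤ 1) {K : ℕ} (hK : x ≤ K) :
    r ^ K ≤ exp (log r * x) := by
  rw [← rpow_natCast, rpow_def_of_pos hr0]
  exact exp_le_exp.2 (mul_le_mul_of_nonpos_left hK (log_nonpos hr0.le hr1))

/-- The tail of the summation of an analytic symbol, from `⌈c₁N⌉` to `⌊eN/(3R)⌋`,
is exponentially small. -/
theorem analytic_symbol_tail_exponentially_small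
    (C R m : ℝ) (hC : 0 ≤ C) (hR : 0 < R) (f : ℕ → ℂ)
    (hf : ∀ k : ℕ, ‖f k‖ ≤ C * R ^ k * (Nat.factorial k) / ((k : ℝ) + 1) ^ m) :
    ∀ c₁ : ℝ, 0 < c₁ → c₁ < Real.exp 1 / (3 * R) →
      ∃ c₂ : ℝ, 0 < c₂ ∧ ∃ C' : ℝ, 0 ≤ C' ∧ ∀ N : ℕ, 1 ≤ N →
        ‖∑ k ∈ Finset.Icc ⌈c₁ * N⌉₊ ⌊Real.exp 1 * N / (3 * R)⌋₊,
          ((N : ℂ))⁻¹ ^ k * f k‖ ≤ C' * Real.exp (-c₂ * N) := by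
  intro c₁ hc₁ _
  obtain ⟨r, hqr, hr1⟩ := exists_between exp_one_div_three_lt_one
  have hr0 : 0 < r := (by positivity : 0 < exp 1 / 3).trans hqr
  obtain ⟨A, hA0, hA⟩ := exists_pow_div_rpow_le_mul_pow (by positivity) hqr m
  refine ⟨-log r * c₁, mul_pos (neg_pos.2 (log_neg hr0 hr1)) hc₁, C * A / (1 - r),
    div_nonneg (mul_nonneg hC hA0) (sub_nonneg.2 hr1.le), fun N hN => ?_⟩
  have hterm : ∀ k ∈ Icc ⌈c₁ * N⌉₊ ⌊exp 1 * N / (3 * R)⌋₊,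
      ‖(N : ℂ)⁻¹ ^ k * f k‖ ≤ C * A * r ^ k := fun k hk => by
    have hkL := (Nat.cast_le.2 (mem_Icc.1 hk).2).trans (Nat.floor_le (by positivity))
    rw [le_div_iff₀ (by positivity)] at hkL
    calc ‖(N : ℂ)⁻¹ ^ k * f k‖ ≤ C * ((exp 1 / 3) ^ k / ((k : ℝ) + 1) ^ m) :=
          IsAnalyticSymbol.norm_inv_pow_mul_le hf hC hR.le hN (by linarith)
      _ ≤ C * A * r ^ k := by rw [mul_assoc]; exact mul_le_mul_of_nonneg_left (hA k) hC
  calc ‖∑ k ∈ Icc ⌈c₁ * N⌉₊ ⌊exp 1 * N / (3 * R)⌋₊, (N : ℂ)⁻¹ ^ k * f k‖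
      ≤ ∑ k ∈ Icc ⌈c₁ * N⌉₊ ⌊exp 1 * N / (3 * R)⌋₊, C * A * r ^ k :=
        (norm_sum_le _ _).trans (sum_le_sum hterm)
    _ ≤ C * A * (r ^ ⌈c₁ * N⌉₊ / (1 - r)) := by
        rw [← mul_sum]; gcongr; exact sum_Icc_pow_le_of_lt_one hr0.le hr1 _ _
    _ ≤ C * A / (1 - r) * exp (-(-log r * c₁) * N) := by
        rw [mul_div_assoc', div_mul_eq_mul_div, show -(-log r * c₁) * N = log r * (c₁ * N) by ring]
        have : 0 < 1 - r := sub_pos.2 hr1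
        gcongr
        exact pow_le_exp_log_mul hr0 hr1.le (Nat.le_ceil _)
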